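/- Let K = ℂ², let T₁ be the diagonal operator diag(1, 1/2) on ℂ² and T₂ the diagonal operator diag(1, 1/3) on ℂ², and put H = K ⊕ K. Then T₁ and T₂ are not similar (there is no invertible linear operator W on ℂ² with T₂ = W T₁ W^{-1}), but the systems (H; K ⊕ 0, graph(T₁)) and (H; K ⊕ 0, graph(T₂)) are boundedly isomorphic. -/

import Mathlib

/-! Similar operators have equal traces, and `tr T₁ = 3/2 ≠ 4/3 = tr T₂`. A bounded isomorphism
of the two systems, however, only has to preserve `K ⊕ 0`, so it may act as `id ⊕ D` with `D`
any invertible operator, unrelated to a similarity: for `D = diag(1, 2/3)` one has `D T₁ = T₂`, so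
`id ⊕ D` fixes `K ⊕ 0` and carries `graph T₁` onto `graph T₂`. -/

noncomputable section

/-- The diagonal operator diag(1, 1/2) on ℂ². -/
def T₁ : (Fin 2 → ℂ) →ₗ[ℂ] (Fin 2 → ℂ) := Matrix.toLin' (Matrix.diagonal ![1, 1/2])

/-- The diagonal operator diag(1, 1/3) on ℂ². -/
def T₂ : (Fin 2 → ℂ) →ₗ[ℂ] (Fin 2 → ℂ) := Matrix.toLin' (Matrix.diagonal ![1, 1/3])

namespace LinearMap

theorem not_exists_conj_of_trace_ne {R M : Type*} [CommRing R] [AddCommGroup M] [Module R M]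
    {S T : M →ₗ[R] M} (h : trace R M S ≠ trace R M T) :
    ¬ ∃ W : M ≃ₗ[R] M, ∀ x, T x = W (S (W.symm x)) := by
  rintro ⟨W, hW⟩
  have hconj : W.conj S = T := ext fun x => (hW x).symm
  exact h (by rw [← hconj, trace_conj'])

theorem trace_toLin'_diagonal {R n : Type*} [CommRing R] [Fintype n] [DecidableEq n]
    (d : n → R) : trace R (n → R) (Matrix.toLin' (Matrix.diagonal d)) = ∑ i, d i := by
  rw [trace_eq_matrix_trace R (Pi.basisFun R n), toMatrix_eq_toMatrix', toMatrix'_toLin',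
    Matrix.trace_diagonal]

end LinearMap

namespace ContinuousLinearEquiv

variable {R E F E' F' : Type*} [Semiring R]
  [AddCommMonoid E] [AddCommMonoid F] [AddCommMonoid E'] [AddCommMonoid F']
  [Module R E] [Module R F] [Module R E'] [Module R F']
  [TopologicalSpace E] [TopologicalSpace F] [TopologicalSpace E'] [TopologicalSpace F']

theorem image_prodCongr_top_prod_bot (e₁ : E ≃L[R] E') (e₂ : F ≃L[R] F') :
    e₁.prodCongr e₂ '' ((⊤ : Submodule R E).prod (⊥ : Submodule R F) : Set (E × F)) =
      ((⊤ : Submodule R E').prod (⊥ : Submodule R F') : Set (E' × F')) := by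
  rw [ContinuousLinearEquiv.image_eq_preimage_symm]
  ext ⟨a, b⟩
  simp

theorem image_prodCongr_graph (e₁ : E ≃L[R] E') (e₂ : F ≃L[R] F') {S : E →ₗ[R] F}
    {T : E' →ₗ[R] F'} (h : ∀ x, e₂ (S x) = T (e₁ x)) :
    e₁.prodCongr e₂ '' (S.graph : Set (E × F)) = (T.graph : Set (E' × F')) := by
  rw [ContinuousLinearEquiv.image_eq_preimage_symm]
  ext ⟨a, b⟩
  simp only [Set.mem_preimage, prodCongr_symm, prodCongr_apply, SetLike.mem_coe,
    LinearMap.mem_graph_iff, symm_apply_eq, h, apply_symm_apply]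

end ContinuousLinearEquiv

theorem trace_T₁_ne_trace_T₂ : LinearMap.trace ℂ _ T₁ ≠ LinearMap.trace ℂ _ T₂ := by
  simp only [T₁, T₂, LinearMap.trace_toLin'_diagonal, Fin.sum_univ_two]
  norm_num

def diagOneTwoThirds : (Fin 2 → ℂ) ≃ₗ[ℂ] (Fin 2 → ℂ) :=
  LinearEquiv.piCongrRight fun i =>
    LinearEquiv.smulOfNeZero ℂ ℂ (![1, 2/3] i) (by fin_cases i <;> norm_num)

theorem diagOneTwoThirds_T₁ (x : Fin 2 → ℂ) : diagOneTwoThirds (T₁ x) = T₂ x := by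
  funext i
  simp only [diagOneTwoThirds, LinearEquiv.piCongrRight_apply, LinearEquiv.smulOfNeZero_apply,
    T₁, T₂, Matrix.toLin'_apply, Matrix.mulVec_diagonal, smul_eq_mul]
  fin_cases i
  · simp
  · norm_num
    ring

theorem not_similar_but_boundedly_isomorphic :
    (¬ ∃ W : (Fin 2 → ℂ) ≃ₗ[ℂ] (Fin 2 → ℂ), ∀ x, T₂ x = W (T₁ (W.symm x))) ∧
    (∃ V : ((Fin 2 → ℂ) × (Fin 2 → ℂ)) ≃L[ℂ] ((Fin 2 → ℂ) × (Fin 2 → ℂ)),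
      V '' (((⊤ : Submodule ℂ (Fin 2 → ℂ)).prod (⊥ : Submodule ℂ (Fin 2 → ℂ))) :
          Set ((Fin 2 → ℂ) × (Fin 2 → ℂ))) =
        (((⊤ : Submodule ℂ (Fin 2 → ℂ)).prod (⊥ : Submodule ℂ (Fin 2 → ℂ))) :
          Set ((Fin 2 → ℂ) × (Fin 2 → ℂ))) ∧
      V '' ((LinearMap.graph T₁) : Set ((Fin 2 → ℂ) × (Fin 2 → ℂ))) =
        ((LinearMap.graph T₂) : Set ((Fin 2 → ℂ) × (Fin 2 → ℂ)))) := by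
  let V := (ContinuousLinearEquiv.refl ℂ (Fin 2 → ℂ)).prodCongr
    diagOneTwoThirds.toContinuousLinearEquiv
  exact ⟨LinearMap.not_exists_conj_of_trace_ne trace_T₁_ne_trace_T₂,
    V, ContinuousLinearEquiv.image_prodCongr_top_prod_bot _ _,
    ContinuousLinearEquiv.image_prodCongr_graph _ _ diagOneTwoThirds_T₁⟩

end
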